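/- arXiv:math/0411375 — 5 statements merged into one kernel-verified Lean document; each statement's English description precedes it below -/
import Mathlib

section
/- For every integer m ≥ 1 and every A ∈ SL(2,ℝ), the set of holomorphic functions δ : ℍ → ℂ such that δ(z)^m · (denom A z)² = 1 for all z ∈ ℍ has exactly m elements (i.e. its Nat.card equals m). (This is the fiberwise content of Proposition 2.2: the projection from the model of the m-fold covering group G_m of PSL(2,ℝ) to PSL(2,ℝ) is an m-fold covering.) -/
open scoped MatrixGroups Manifold UpperHalfPlane

/-- The Möbius cocycle `denom A z = c z + d` for `A = [[a,b],[c,d]] ∈ SL(2,ℝ)` and `z ∈ ℍ`. -/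
noncomputable def mdenom (A : Matrix.SpecialLinearGroup (Fin 2) ℝ) (z : ℍ) : ℂ :=
  ((A 1 0 : ℝ) : ℂ) * (z : ℂ) + ((A 1 1 : ℝ) : ℂ)

/-!
Two holomorphic solutions `δ, δ₀` of `δ ^ m = (denom A)⁻²` have a continuous quotient with
values in the finite, hence discrete, set of `m`-th roots of unity; as `ℍ` is connected the
quotient is constant. So the solutions are exactly the `ζ • δ₀` with `ζ ^ m = 1`, once one
solution `δ₀` exists. For that take the principal branch `δ₀ = (ε · denom A) ^ (-2/m)`, where the
sign `ε = ±1` keeps `ε · denom A` off the negative real axis.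
-/

open UpperHalfPlane

theorem Continuous.apply_eq_of_forall_pow_eq_one {X R : Type*} [TopologicalSpace X]
    [PreconnectedSpace X] [CommRing R] [IsDomain R] [TopologicalSpace R] [T1Space R] {m : ℕ}
    (hm : 0 < m) {f : X → R} (hf : Continuous f) (h : ∀ x, f x ^ m = 1) (x y : X) :
    f x = f y := by
  let F : X → Polynomial.nthRootsFinset m (1 : R) :=
    fun x ↦ ⟨f x, (Polynomial.mem_nthRootsFinset hm 1).mpr (h x)⟩
  have hF : IsLocallyConstant F :=
    (IsLocallyConstant.of_discrete id).comp_continuous (hf.subtype_mk _)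
  exact congrArg Subtype.val (hF.apply_eq_of_preconnectedSpace x y)

theorem MDifferentiable.cpow_const {E H M : Type*} [NormedAddCommGroup E] [NormedSpace ℂ E]
    [TopologicalSpace H] {I : ModelWithCorners ℂ E H} [TopologicalSpace M] [ChartedSpace H M]
    {f : M → ℂ} (hf : MDifferentiable I 𝓘(ℂ) f) (hf_slit : ∀ x, f x ∈ Complex.slitPlane)
    (c : ℂ) : MDifferentiable I 𝓘(ℂ) (fun x ↦ f x ^ c) := fun x ↦
  (differentiableAt_id.cpow_const (hf_slit x)).comp_mdifferentiableAt (hf x)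

theorem card_mdifferentiable_pow_eq_pow {m : ℕ} [NeZero m] {g : ℍ → ℂ} (hg : MDiff g)
    (hg₀ : ∀ z, g z ≠ 0) :
    Nat.card {f : ℍ → ℂ // MDiff f ∧ ∀ z, f z ^ m = g z ^ m} = m := by
  let φ : rootsOfUnity m ℂ → {f : ℍ → ℂ // MDiff f ∧ ∀ z, f z ^ m = g z ^ m} := fun ζ ↦
    ⟨fun z ↦ ((ζ : ℂˣ) : ℂ) * g z, mdifferentiable_const.mul hg, fun z ↦ by
      rw [mul_pow, (mem_rootsOfUnity' m (ζ : ℂˣ)).mp ζ.2, one_mul]⟩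
  have hφ : Function.Bijective φ := by
    constructor
    · intro ζ η h
      have : ((ζ : ℂˣ) : ℂ) * g I = ((η : ℂˣ) : ℂ) * g I := congrFun (congrArg Subtype.val h) I
      exact Subtype.ext <| Units.ext <| mul_right_cancel₀ (hg₀ I) this
    · rintro ⟨f, hf, hfg⟩
      have hq : ∀ z, (f z / g z) ^ m = 1 := fun z ↦ by
        rw [div_pow, hfg, div_self (pow_ne_zero _ (hg₀ z))]
      have hconst : ∀ z w, f z / g z = f w / g w :=
        (hf.continuous.div hg.continuous hg₀).apply_eq_of_forall_pow_eq_one (Nat.pos_of_neZero m) hq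
      refine ⟨rootsOfUnity.mkOfPowEq _ (hq I), Subtype.ext <| funext fun z ↦ ?_⟩
      change (((rootsOfUnity.mkOfPowEq _ _ : rootsOfUnity m ℂ) : ℂˣ) : ℂ) * g z = f z
      rw [rootsOfUnity.coe_mkOfPowEq, hconst I z]
      exact div_mul_cancel₀ _ (hg₀ z)
  rw [← Nat.card_eq_of_bijective φ hφ, Complex.card_rootsOfUnity]

theorem mdenom_ne_zero (A : SL(2, ℝ)) (z : ℍ) : mdenom A z ≠ 0 :=
  denom_ne_zero A z

theorem exists_mul_mdenom_mem_slitPlane (A : SL(2, ℝ)) :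
    ∃ ε : ℂ, ε ^ 2 = 1 ∧ ∀ z, ε * mdenom A z ∈ Complex.slitPlane := by
  by_cases hc : A 1 0 = 0
  · have hd : A 1 1 ≠ 0 := by
      intro hd
      have hdet := A.det_coe
      rw [Matrix.det_fin_two, hc, hd] at hdet
      simp at hdet
    rcases hd.lt_or_gt with hd | hd
    · refine ⟨-1, by norm_num, fun z ↦ ?_⟩
      simpa [mdenom, hc, ← Complex.ofReal_neg] using
        Complex.ofReal_mem_slitPlane.mpr (neg_pos.mpr hd)
    · refine ⟨1, one_pow 2, fun z ↦ ?_⟩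
      simpa [mdenom, hc] using Complex.ofReal_mem_slitPlane.mpr hd
  · refine ⟨1, one_pow 2, fun z ↦ Complex.mem_slitPlane_iff.mpr (Or.inr ?_)⟩
    simpa [mdenom] using ⟨hc, z.im_ne_zero⟩

theorem exists_mdifferentiable_pow_mul_mdenom_sq_eq_one {m : ℕ} (hm : m ≠ 0) (A : SL(2, ℝ)) :
    ∃ δ : ℍ → ℂ, MDiff δ ∧ ∀ z, δ z ^ m * mdenom A z ^ 2 = 1 := by
  obtain ⟨ε, hε, hslit⟩ := exists_mul_mdenom_mem_slitPlane A
  have hol : MDiff fun z ↦ ε * mdenom A z := mdifferentiable_const.mul (mdifferentiable_denom A)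
  refine ⟨fun z ↦ (ε * mdenom A z) ^ (-2 / m : ℂ), hol.cpow_const hslit _, fun z ↦ ?_⟩
  calc ((ε * mdenom A z) ^ (-2 / m : ℂ)) ^ m * mdenom A z ^ 2
      = ((ε * mdenom A z) ^ 2)⁻¹ * mdenom A z ^ 2 := by
        rw [← Complex.cpow_nat_mul, mul_div_cancel₀ _ (Nat.cast_ne_zero.mpr hm),
          Complex.cpow_neg, Complex.cpow_ofNat]
    _ = 1 := by rw [mul_pow, hε, one_mul, inv_mul_cancel₀ (pow_ne_zero 2 (mdenom_ne_zero A z))]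

/-- For every integer `m ≥ 1` and every `A ∈ SL(2,ℝ)`, the set of holomorphic functions
`δ : ℍ → ℂ` with `δ(z)^m · (denom A z)² = 1` for all `z ∈ ℍ` has exactly `m` elements. -/
theorem fiber_card_eq (m : ℕ) (hm : 1 ≤ m) (A : Matrix.SpecialLinearGroup (Fin 2) ℝ) :
    Nat.card {δ : ℍ → ℂ //
      MDifferentiable 𝓘(ℂ) 𝓘(ℂ) δ ∧ ∀ z : ℍ, δ z ^ m * (mdenom A z) ^ 2 = 1} = m := by
  have : NeZero m := ⟨by omega⟩
  obtain ⟨δ₀, hδ₀, hδ₀_root⟩ := exists_mdifferentiable_pow_mul_mdenom_sq_eq_one (NeZero.ne m) A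
  have hδ₀_ne : ∀ z, δ₀ z ≠ 0 := fun z h ↦ by
    simpa [h, zero_pow (NeZero.ne m)] using hδ₀_root z
  have hroot_iff : ∀ (δ : ℍ → ℂ) z, δ z ^ m * mdenom A z ^ 2 = 1 ↔ δ z ^ m = δ₀ z ^ m :=
    fun δ z ↦ by
      rw [← hδ₀_root z]
      exact mul_left_inj' (pow_ne_zero 2 (mdenom_ne_zero A z))
  simp only [hroot_iff]
  exact card_mdifferentiable_pow_eq_pow hδ₀ hδ₀_ne
end

section
/- Let A, B ∈ SL(2,ℝ) be hyperbolic, i.e. |A 0 0 + A 1 1| > 2 and |B 0 0 + B 1 1| > 2. Suppose there are real numbers p₁ < q₁ < p₂ < q₂ such that p₁ and p₂ are fixed points of the Möbius transformation of A (i.e. (A 1 0)·pᵢ² + (A 1 1 − A 0 0)·pᵢ − A 0 1 = 0 for i = 1,2) and q₁ and q₂ are fixed points of the Möbius transformation of B (i.e. (B 1 0)·qᵢ² + (B 1 1 − B 0 0)·qᵢ − B 0 1 = 0 for i = 1,2); in other words, the axes of A and B intersect. Then the product A·B is hyperbolic: |(A·B) 0 0 + (A·B) 1 1| > 2. (The key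 geometric step in Corollary 2.9: the product of two hyperbolic elements with distinct intersecting axes is hyperbolic.) -/
open scoped MatrixGroups

/-!
A point `p ∈ ℝ` is fixed by the Möbius map of `M = !![a, b; c, d]` exactly when `(p, 1)` is an
eigenvector of `M`, with eigenvalue `c p + d`. Write `λ₁, λ₂` and `μ₁, μ₂` for the eigenvalues of
`A` and `B` at their fixed points, so `λ₁ λ₂ = μ₁ μ₂ = 1`. Conjugating both matrices to diagonal
form gives
`tr (A B) · (X + Y) = X (λ₁ μ₁ + λ₂ μ₂) + Y (λ₁ μ₂ + λ₂ μ₁)`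
with `X = (p₂ - q₁)(q₂ - p₁)`, `Y = (q₁ - p₁)(q₂ - p₂)` and `X + Y = (p₂ - p₁)(q₂ - q₁)`;
interleaving makes `X` and `Y` positive. Both brackets have absolute value at least `2` (each is
`x + 1/x`), and their product exceeds `4` once `λ₁ ≠ λ₂`, i.e. once `A` is hyperbolic. So
`tr (A B)`, a weighted mean of the two brackets, has absolute value greater than `2`.
-/

theorem ne_of_mul_eq_one_of_two_lt_abs_add {x y : ℝ} (h : x * y = 1) (hxy : 2 < |x + y|) :
    x ≠ y := by
  rintro rfl
  nlinarith [sq_abs (x + x), abs_nonneg (x + x)]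

theorem four_le_sq_mul_add_mul {x₁ x₂ y₁ y₂ : ℝ} (hx : x₁ * x₂ = 1) (hy : y₁ * y₂ = 1) :
    4 ≤ (x₁ * y₁ + x₂ * y₂) ^ 2 := by
  have h := four_mul_le_sq_add (x₁ * y₁) (x₂ * y₂)
  rwa [mul_assoc, mul_mul_mul_comm, hx, hy, mul_one, mul_one] at h

theorem four_lt_mul_of_mul_eq_one {x₁ x₂ y₁ y₂ : ℝ} (hx : x₁ * x₂ = 1) (hy : y₁ * y₂ = 1)
    (hne : x₁ ≠ x₂) : 4 < (x₁ * y₁ + x₂ * y₂) * (x₁ * y₂ + x₂ * y₁) := by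
  have key : (x₁ * y₁ + x₂ * y₂) * (x₁ * y₂ + x₂ * y₁) = (x₁ - x₂) ^ 2 + (y₁ - y₂) ^ 2 + 4 := by
    linear_combination (x₁ ^ 2 + x₂ ^ 2 + 2) * hy + (y₁ ^ 2 + y₂ ^ 2 + 2) * hx
  rw [key]
  linarith [sq_pos_of_ne_zero (sub_ne_zero.mpr hne), sq_nonneg (y₁ - y₂)]

theorem two_lt_abs_of_mul_add_eq {S₁ S₂ X Y T : ℝ} (h₁ : 4 ≤ S₁ ^ 2) (h₂ : 4 ≤ S₂ ^ 2)
    (h₁₂ : 4 < S₁ * S₂) (hX : 0 < X) (hY : 0 < Y) (hT : T * (X + Y) = X * S₁ + Y * S₂) :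
    2 < |T| := by
  have expand : (T ^ 2 - 4) * (X + Y) ^ 2 =
      X ^ 2 * (S₁ ^ 2 - 4) + Y ^ 2 * (S₂ ^ 2 - 4) + 2 * X * Y * (S₁ * S₂ - 4) := by
    linear_combination (T * (X + Y) + X * S₁ + Y * S₂) * hT
  have hpos : 0 < (T ^ 2 - 4) * (X + Y) ^ 2 := by
    rw [expand]
    have : 0 < 2 * X * Y * (S₁ * S₂ - 4) := by
      have : 0 < S₁ * S₂ - 4 := by linarith
      positivity
    linarith [mul_nonneg (sq_nonneg X) (sub_nonneg.mpr h₁),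
      mul_nonneg (sq_nonneg Y) (sub_nonneg.mpr h₂)]
  have hT2 : 0 < T ^ 2 - 4 := pos_of_mul_pos_left hpos (sq_nonneg _)
  simpa using sq_lt_sq.mp (show (2 : ℝ) ^ 2 < T ^ 2 by linarith)

def IsMobiusFixedPoint (M : Matrix (Fin 2) (Fin 2) ℝ) (x : ℝ) : Prop :=
  M 1 0 * x ^ 2 + (M 1 1 - M 0 0) * x - M 0 1 = 0

namespace IsMobiusFixedPoint

variable {M N : Matrix (Fin 2) (Fin 2) ℝ} {p₁ p₂ q₁ q₂ : ℝ}

theorem entry_one_one_eq (h₁ : IsMobiusFixedPoint M p₁) (h₂ : IsMobiusFixedPoint M p₂)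
    (hp : p₁ ≠ p₂) : M 1 1 = M 0 0 - M 1 0 * (p₁ + p₂) := by
  have : (M 1 1 - M 0 0 + M 1 0 * (p₁ + p₂)) * (p₁ - p₂) = 0 := by
    unfold IsMobiusFixedPoint at h₁ h₂
    linear_combination h₁ - h₂
  linarith [(mul_eq_zero.mp this).resolve_right (sub_ne_zero.mpr hp)]

theorem entry_zero_one_eq (h₁ : IsMobiusFixedPoint M p₁) (h₂ : IsMobiusFixedPoint M p₂)
    (hp : p₁ ≠ p₂) : M 0 1 = -(M 1 0 * (p₁ * p₂)) := by
  have hd := entry_one_one_eq h₁ h₂ hp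
  unfold IsMobiusFixedPoint at h₁
  linear_combination p₁ * hd - h₁

theorem det_eq (h₁ : IsMobiusFixedPoint M p₁) (h₂ : IsMobiusFixedPoint M p₂) (hp : p₁ ≠ p₂) :
    M.det = (M 1 0 * p₁ + M 1 1) * (M 1 0 * p₂ + M 1 1) := by
  rw [Matrix.det_fin_two, entry_zero_one_eq h₁ h₂ hp, entry_one_one_eq h₁ h₂ hp]
  ring

theorem trace_eq (h₁ : IsMobiusFixedPoint M p₁) (h₂ : IsMobiusFixedPoint M p₂) (hp : p₁ ≠ p₂) :
    M.trace = (M 1 0 * p₁ + M 1 1) + (M 1 0 * p₂ + M 1 1) := by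
  rw [Matrix.trace_fin_two, entry_one_one_eq h₁ h₂ hp]
  ring

theorem trace_mul_mul_sub_mul_sub (hp₁ : IsMobiusFixedPoint M p₁)
    (hp₂ : IsMobiusFixedPoint M p₂) (hp : p₁ ≠ p₂) (hq₁ : IsMobiusFixedPoint N q₁)
    (hq₂ : IsMobiusFixedPoint N q₂) (hq : q₁ ≠ q₂) :
    (M * N).trace * ((p₂ - q₁) * (q₂ - p₁) + (q₁ - p₁) * (q₂ - p₂)) =
      (p₂ - q₁) * (q₂ - p₁) *
          ((M 1 0 * p₁ + M 1 1) * (N 1 0 * q₁ + N 1 1) +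
            (M 1 0 * p₂ + M 1 1) * (N 1 0 * q₂ + N 1 1)) +
        (q₁ - p₁) * (q₂ - p₂) *
          ((M 1 0 * p₁ + M 1 1) * (N 1 0 * q₂ + N 1 1) +
            (M 1 0 * p₂ + M 1 1) * (N 1 0 * q₁ + N 1 1)) := by
  simp only [Matrix.trace_fin_two, Matrix.mul_apply, Fin.sum_univ_two]
  rw [entry_zero_one_eq hp₁ hp₂ hp, entry_one_one_eq hp₁ hp₂ hp,
    entry_zero_one_eq hq₁ hq₂ hq, entry_one_one_eq hq₁ hq₂ hq]
  ring

end IsMobiusFixedPoint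

theorem product_of_hyperbolics_with_crossing_axes_is_hyperbolic_general
    (A B : Matrix.SpecialLinearGroup (Fin 2) ℝ)
    (hA : 2 < |A 0 0 + A 1 1|)
    (p₁ q₁ p₂ q₂ : ℝ) (h₁ : p₁ < q₁) (h₂ : q₁ < p₂) (h₃ : p₂ < q₂)
    (hp₁ : A 1 0 * p₁ ^ 2 + (A 1 1 - A 0 0) * p₁ - A 0 1 = 0)
    (hp₂ : A 1 0 * p₂ ^ 2 + (A 1 1 - A 0 0) * p₂ - A 0 1 = 0)
    (hq₁ : B 1 0 * q₁ ^ 2 + (B 1 1 - B 0 0) * q₁ - B 0 1 = 0)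
    (hq₂ : B 1 0 * q₂ ^ 2 + (B 1 1 - B 0 0) * q₂ - B 0 1 = 0) :
    2 < |(A * B) 0 0 + (A * B) 1 1| := by
  have hp : p₁ ≠ p₂ := (h₁.trans h₂).ne
  have hq : q₁ ≠ q₂ := (h₂.trans h₃).ne
  have hdetA := (IsMobiusFixedPoint.det_eq hp₁ hp₂ hp).symm.trans A.det_coe
  have hdetB := (IsMobiusFixedPoint.det_eq hq₁ hq₂ hq).symm.trans B.det_coe
  have hne := ne_of_mul_eq_one_of_two_lt_abs_add hdetA <| by
    rwa [← IsMobiusFixedPoint.trace_eq hp₁ hp₂ hp, Matrix.trace_fin_two]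
  rw [← Matrix.trace_fin_two, Matrix.SpecialLinearGroup.coe_mul]
  exact two_lt_abs_of_mul_add_eq (four_le_sq_mul_add_mul hdetA hdetB)
    (four_le_sq_mul_add_mul hdetA (by rwa [mul_comm] at hdetB))
    (four_lt_mul_of_mul_eq_one hdetA hdetB hne)
    (mul_pos (by linarith) (by linarith)) (mul_pos (by linarith) (by linarith))
    (IsMobiusFixedPoint.trace_mul_mul_sub_mul_sub hp₁ hp₂ hp hq₁ hq₂ hq)

/-- The product of two hyperbolic elements of `SL(2,ℝ)` whose axes intersect (i.e. whose
pairs of real fixed points interleave on `ℝ`) is hyperbolic. -/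
theorem product_of_hyperbolics_with_crossing_axes_is_hyperbolic
    (A B : Matrix.SpecialLinearGroup (Fin 2) ℝ)
    (hA : 2 < |A 0 0 + A 1 1|) (hB : 2 < |B 0 0 + B 1 1|)
    (p₁ q₁ p₂ q₂ : ℝ) (h₁ : p₁ < q₁) (h₂ : q₁ < p₂) (h₃ : p₂ < q₂)
    (hp₁ : A 1 0 * p₁ ^ 2 + (A 1 1 - A 0 0) * p₁ - A 0 1 = 0)
    (hp₂ : A 1 0 * p₂ ^ 2 + (A 1 1 - A 0 0) * p₂ - A 0 1 = 0)
    (hq₁ : B 1 0 * q₁ ^ 2 + (B 1 1 - B 0 0) * q₁ - B 0 1 = 0)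
    (hq₂ : B 1 0 * q₂ ^ 2 + (B 1 1 - B 0 0) * q₂ - B 0 1 = 0) :
    2 < |(A * B) 0 0 + (A * B) 1 1| :=
  product_of_hyperbolics_with_crossing_axes_is_hyperbolic_general A B hA p₁ q₁ p₂ q₂ h₁ h₂ h₃ hp₁
    hp₂ hq₁ hq₂
end

section
/- Let X, Y ∈ SL(2,ℝ) with trace X = 0 and trace Y = 0 (so X and Y act on ℍ as rotations by the angle π about their unique fixed points). Suppose X • x = x and Y • y = y for points x, y ∈ ℍ with x ≠ y. Then the product X·Y is hyperbolic: |trace (X·Y)| > 2. (This is the half-turn lemma used in the geometric proof of Corollary 2.9: the product of rotations by π about two distinct points of the hyperbolic plane is a hyperbolic transformation.) -/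
/-!
A trace-zero element of `SL(2, ℝ)` fixing `z ∈ ℍ` is forced to be
`c • !![re z, -‖z‖²; 1, -re z]` with `|c| · im z = 1`. Multiplying two such matrices gives
`|tr (X Y)| = ((re x - re y)² + im x² + im y²) / (im x · im y) = 2 cosh d(x, y)`,
which exceeds `2` as soon as `x ≠ y`.
-/

open scoped MatrixGroups
open Matrix

namespace UpperHalfPlane

variable {g : SL(2, ℝ)} {z : ℍ}

theorem sl_entries_of_smul_eq_self (h : g • z = z) :
    g 0 0 - g 1 1 = 2 * g 1 0 * z.re ∧ g 0 1 = -(g 1 0 * (z.re ^ 2 + z.im ^ 2)) := by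
  have hq := (gl_smul_eq_self_iff_quadratic (g := SpecialLinearGroup.mapGL ℝ g) (z := z)
    (by simp)).1 h
  have hre := congrArg Complex.re hq
  have him := congrArg Complex.im hq
  simp only [SpecialLinearGroup.mapGL_coe_matrix, Algebra.algebraMap_self,
    SpecialLinearGroup.map_apply_coe, RingHom.mapMatrix_id, RingHom.id_apply, Complex.add_re,
    Complex.mul_re, Complex.ofReal_re, coe_re, coe_im, Complex.ofReal_im, Complex.mul_im, zero_mul,
    sub_zero, Complex.sub_re, Complex.sub_im, sub_self, Complex.neg_re, Complex.zero_re,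
    Complex.add_im, add_zero, Complex.neg_im, neg_zero, Complex.zero_im] at hre him
  have hdiag : g 0 0 - g 1 1 = 2 * g 1 0 * z.re :=
    mul_right_cancel₀ z.im_ne_zero (by linear_combination -him)
  exact ⟨hdiag, by linear_combination -hre - z.re * hdiag⟩

theorem sl_entries_of_trace_eq_zero_of_smul_eq_self
    (htr : trace (g : Matrix (Fin 2) (Fin 2) ℝ) = 0) (h : g • z = z) :
    g 0 0 = g 1 0 * z.re ∧ g 1 1 = -(g 1 0 * z.re) ∧ g 0 1 = -(g 1 0 * (z.re ^ 2 + z.im ^ 2)) ∧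
      |g 1 0| * z.im = 1 := by
  obtain ⟨hdiag, hb⟩ := sl_entries_of_smul_eq_self h
  rw [trace_fin_two] at htr
  have hdet : g 0 0 * g 1 1 - g 0 1 * g 1 0 = 1 := by rw [← det_fin_two]; exact g.det_coe
  have ha : g 0 0 = g 1 0 * z.re := by linear_combination (htr + hdiag) / 2
  have hd : g 1 1 = -(g 1 0 * z.re) := by linear_combination (htr - hdiag) / 2
  have hc : (g 1 0 * z.im) ^ 2 = 1 := by
    rw [ha, hd, hb] at hdet
    linear_combination hdet
  refine ⟨ha, hd, hb, ?_⟩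
  rw [← abs_of_pos z.im_pos, ← abs_mul]
  exact (pow_eq_one_iff_of_nonneg (abs_nonneg _) two_ne_zero).1 (by rwa [sq_abs])

theorem trace_mul_of_half_turns {X Y : SL(2, ℝ)} {x y : ℍ}
    (hX : trace (X : Matrix (Fin 2) (Fin 2) ℝ) = 0) (hY : trace (Y : Matrix (Fin 2) (Fin 2) ℝ) = 0)
    (hXx : X • x = x) (hYy : Y • y = y) :
    trace ((X * Y : SL(2, ℝ)) : Matrix (Fin 2) (Fin 2) ℝ) =
      -(X 1 0 * Y 1 0) * ((x.re - y.re) ^ 2 + x.im ^ 2 + y.im ^ 2) := by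
  obtain ⟨ha, hd, hb, -⟩ := sl_entries_of_trace_eq_zero_of_smul_eq_self hX hXx
  obtain ⟨ha', hd', hb', -⟩ := sl_entries_of_trace_eq_zero_of_smul_eq_self hY hYy
  rw [Matrix.SpecialLinearGroup.coe_mul, trace_fin_two]
  simp only [mul_apply, Fin.sum_univ_two]
  rw [ha, hd, hb, ha', hd', hb']
  ring

theorem abs_trace_mul_eq_two_mul_cosh_dist {X Y : SL(2, ℝ)} {x y : ℍ}
    (hX : trace (X : Matrix (Fin 2) (Fin 2) ℝ) = 0) (hY : trace (Y : Matrix (Fin 2) (Fin 2) ℝ) = 0)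
    (hXx : X • x = x) (hYy : Y • y = y) :
    |trace ((X * Y : SL(2, ℝ)) : Matrix (Fin 2) (Fin 2) ℝ)| = 2 * Real.cosh (dist x y) := by
  obtain ⟨-, -, -, hc⟩ := sl_entries_of_trace_eq_zero_of_smul_eq_self hX hXx
  obtain ⟨-, -, -, hc'⟩ := sl_entries_of_trace_eq_zero_of_smul_eq_self hY hYy
  rw [trace_mul_of_half_turns hX hY hXx hYy, cosh_dist', abs_mul, abs_neg, abs_mul,
    abs_of_pos (by positivity : 0 < (x.re - y.re) ^ 2 + x.im ^ 2 + y.im ^ 2),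
    eq_inv_of_mul_eq_one_left hc, eq_inv_of_mul_eq_one_left hc']
  field_simp

end UpperHalfPlane

/-- The product of two rotations by the angle `π` about distinct points of the hyperbolic
plane is a hyperbolic transformation: if `X, Y ∈ SL(2,ℝ)` have trace `0` and fix distinct
points `x ≠ y` of `ℍ`, then `|trace (X·Y)| > 2`. -/
theorem product_of_half_turns_is_hyperbolic
    (X Y : Matrix.SpecialLinearGroup (Fin 2) ℝ)
    (hX : Matrix.trace (X : Matrix (Fin 2) (Fin 2) ℝ) = 0)
    (hY : Matrix.trace (Y : Matrix (Fin 2) (Fin 2) ℝ) = 0)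
    (x y : UpperHalfPlane) (hxy : x ≠ y)
    (hXx : X • x = x) (hYy : Y • y = y) :
    2 < |Matrix.trace ((X * Y : Matrix.SpecialLinearGroup (Fin 2) ℝ) :
      Matrix (Fin 2) (Fin 2) ℝ)| := by
  rw [UpperHalfPlane.abs_trace_mul_eq_two_mul_cosh_dist hX hY hXx hYy,
    lt_mul_iff_one_lt_right two_pos, Real.one_lt_cosh]
  exact dist_ne_zero.2 hxy
end

section
/- Let m ≥ 1 and Z = ZMod m. For every pair (α, β) ∈ Z × Z there exist a permutation σ in the subgroup of Equiv.Perm (Z × Z) generated by {e₁, e₂, n, r} and an element d ∈ Z such that σ (α, β) = (d, 0) and the additive subgroup of Z generated by {d} equals the additive subgroup of Z generated by {α, β}. (This is the reduction step in the proof of Lemma 5.5: using transformations 1a, 1b, 5a, 5b any tuple (α₁, β₁) can be transformed into (gcd(m, α₁, β₁), 0).) -/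
/-- Dehn twist action `e₁(α, β) = (α+β, β)`. -/
def e1 (m : ℕ) : Equiv.Perm (ZMod m × ZMod m) where
  toFun p := (p.1 + p.2, p.2)
  invFun p := (p.1 - p.2, p.2)
  left_inv := by rintro ⟨a, b⟩; simp
  right_inv := by rintro ⟨a, b⟩; simp

/-- Dehn twist action `e₂(α, β) = (α, β+α)`. -/
def e2 (m : ℕ) : Equiv.Perm (ZMod m × ZMod m) where
  toFun p := (p.1, p.2 + p.1)
  invFun p := (p.1, p.2 - p.1)
  left_inv := by rintro ⟨a, b⟩; simp
  right_inv := by rintro ⟨a, b⟩; simp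

/-- Dehn twist action `n(α, β) = (−α, −β)`. -/
def nn (m : ℕ) : Equiv.Perm (ZMod m × ZMod m) where
  toFun p := (-p.1, -p.2)
  invFun p := (-p.1, -p.2)
  left_inv := by rintro ⟨a, b⟩; simp
  right_inv := by rintro ⟨a, b⟩; simp

/-- Dehn twist action `r(α, β) = (−β, α)`. -/
def rr (m : ℕ) : Equiv.Perm (ZMod m × ZMod m) where
  toFun p := (-p.2, p.1)
  invFun p := (p.2, -p.1)
  left_inv := by rintro ⟨a, b⟩; simp
  right_inv := by rintro ⟨a, b⟩; simp

/-- Dehn twist action `f_c(α, β) = (−β, α − c − 1)`. -/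
def ff (m : ℕ) (c : ZMod m) : Equiv.Perm (ZMod m × ZMod m) where
  toFun p := (-p.2, p.1 - c - 1)
  invFun p := (p.2 + c + 1, -p.1)
  left_inv := by rintro ⟨a, b⟩; simp [Prod.ext_iff]; ring
  right_inv := by rintro ⟨a, b⟩; simp [Prod.ext_iff]; ring

/-!
The additive subgroup generated by the two coordinates is invariant under each generator, since
each acts by an invertible integer matrix; hence it is invariant under the whole group.
Conversely `r ∘ e₁^(-q)` sends `(a, b)` to `(-b, a - q b)`, one step of the Euclidean algorithm.
Lifting `(α, β)` to integers and running the algorithm on `|b|` reaches a pair `(d, 0)`.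
-/

@[simp] theorem e1_apply (m : ℕ) (p : ZMod m × ZMod m) : e1 m p = (p.1 + p.2, p.2) := rfl
@[simp] theorem e1_inv_apply (m : ℕ) (p : ZMod m × ZMod m) :
    (e1 m)⁻¹ p = (p.1 - p.2, p.2) := rfl
@[simp] theorem e2_apply (m : ℕ) (p : ZMod m × ZMod m) : e2 m p = (p.1, p.2 + p.1) := rfl
@[simp] theorem nn_apply (m : ℕ) (p : ZMod m × ZMod m) : nn m p = (-p.1, -p.2) := rfl
@[simp] theorem rr_apply (m : ℕ) (p : ZMod m × ZMod m) : rr m p = (-p.2, p.1) := rfl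

def genusOneGroup (m : ℕ) : Subgroup (Equiv.Perm (ZMod m × ZMod m)) :=
  Subgroup.closure {e1 m, e2 m, nn m, rr m}

theorem e1_zpow_apply (m : ℕ) (k : ℤ) (p : ZMod m × ZMod m) :
    (e1 m ^ k) p = (p.1 + k • p.2, p.2) := by
  induction k using Int.induction_on generalizing p with
  | zero => simp
  | succ k ih =>
    simp only [zpow_add_one, Equiv.Perm.mul_apply, e1_apply, ih, Prod.mk.injEq, and_true]
    module
  | pred k ih =>
    simp only [zpow_sub_one, Equiv.Perm.mul_apply, e1_inv_apply, ih, Prod.mk.injEq, and_true]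
    module

theorem AddSubgroup.closure_pair_eq_of_zsmul_combinations {A : Type*} [AddCommGroup A]
    {a b c d : A}
    (hc : ∃ i j : ℤ, i • a + j • b = c) (hd : ∃ i j : ℤ, i • a + j • b = d)
    (ha : ∃ i j : ℤ, i • c + j • d = a) (hb : ∃ i j : ℤ, i • c + j • d = b) :
    closure {c, d} = closure {a, b} := by
  simp only [← AddSubgroup.mem_closure_pair] at hc hd ha hb
  apply le_antisymm <;>
    simp [AddSubgroup.closure_le, Set.insert_subset_iff, *]

theorem closure_pair_apply_generator (m : ℕ) {g : Equiv.Perm (ZMod m × ZMod m)}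
    (hg : g ∈ ({e1 m, e2 m, nn m, rr m} : Set _)) (p : ZMod m × ZMod m) :
    AddSubgroup.closure {(g p).1, (g p).2} = AddSubgroup.closure {p.1, p.2} := by
  obtain ⟨a, b⟩ := p
  rcases hg with rfl | rfl | rfl | rfl
  · exact AddSubgroup.closure_pair_eq_of_zsmul_combinations
      ⟨1, 1, by dsimp; module⟩ ⟨0, 1, by dsimp; module⟩
      ⟨1, -1, by dsimp; module⟩ ⟨0, 1, by dsimp; module⟩
  · exact AddSubgroup.closure_pair_eq_of_zsmul_combinations
      ⟨1, 0, by dsimp; module⟩ ⟨1, 1, by dsimp; module⟩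
      ⟨1, 0, by dsimp; module⟩ ⟨-1, 1, by dsimp; module⟩
  · exact AddSubgroup.closure_pair_eq_of_zsmul_combinations
      ⟨-1, 0, by dsimp; module⟩ ⟨0, -1, by dsimp; module⟩
      ⟨-1, 0, by dsimp; module⟩ ⟨0, -1, by dsimp; module⟩
  · exact AddSubgroup.closure_pair_eq_of_zsmul_combinations
      ⟨0, -1, by dsimp; module⟩ ⟨1, 0, by dsimp; module⟩
      ⟨0, 1, by dsimp; module⟩ ⟨-1, 0, by dsimp; module⟩

theorem closure_pair_apply_of_mem_genusOneGroup {m : ℕ} {σ : Equiv.Perm (ZMod m × ZMod m)}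
    (hσ : σ ∈ genusOneGroup m) (p : ZMod m × ZMod m) :
    AddSubgroup.closure {(σ p).1, (σ p).2} = AddSubgroup.closure {p.1, p.2} := by
  induction hσ using Subgroup.closure_induction generalizing p with
  | mem g hg => exact closure_pair_apply_generator m hg p
  | one => rfl
  | mul σ τ _ _ hσ hτ => rw [Equiv.Perm.mul_apply, hσ, hτ]
  | inv σ _ hσ => simpa using (hσ (σ⁻¹ p)).symm

theorem exists_mem_genusOneGroup_apply_intCast (m : ℕ) (a b : ℤ) :
    ∃ σ ∈ genusOneGroup m, ∃ d : ZMod m, σ (a, b) = (d, 0) := by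
  by_cases hb : b = 0
  · exact ⟨1, one_mem _, a, by simp [hb]⟩
  have hdecreasing : (a % b).natAbs < b.natAbs := by
    have := Int.emod_lt a hb; have := Int.emod_nonneg a hb; omega
  obtain ⟨σ, hσ, d, hd⟩ := exists_mem_genusOneGroup_apply_intCast m (-b) (a % b)
  refine ⟨σ * (rr m * e1 m ^ (-(a / b))), mul_mem hσ (mul_mem ?_ (zpow_mem ?_ _)), d, ?_⟩
  · exact Subgroup.subset_closure (by simp)
  · exact Subgroup.subset_closure (by simp)
  · rw [← hd, Equiv.Perm.mul_apply, Equiv.Perm.mul_apply, e1_zpow_apply, rr_apply, Int.emod_def]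
    push_cast [zsmul_eq_mul]
    congr 2
    ring
termination_by b.natAbs

theorem genus_one_reduction_general (m : ℕ) (α β : ZMod m) :
    ∃ σ ∈ Subgroup.closure ({e1 m, e2 m, nn m, rr m} : Set (Equiv.Perm (ZMod m × ZMod m))),
      ∃ d : ZMod m, σ (α, β) = (d, 0) ∧
        AddSubgroup.closure {d} = AddSubgroup.closure {α, β} := by
  obtain ⟨a, rfl⟩ := ZMod.intCast_surjective α
  obtain ⟨b, rfl⟩ := ZMod.intCast_surjective β
  obtain ⟨σ, hσ, d, hd⟩ := exists_mem_genusOneGroup_apply_intCast m a b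
  refine ⟨σ, hσ, d, hd, ?_⟩
  have hspan := closure_pair_apply_of_mem_genusOneGroup hσ (a, b)
  rwa [hd, Set.pair_comm, AddSubgroup.closure_insert_zero] at hspan

/-- Using the genus-1 Dehn twist transformations `e₁, e₂, n, r`, any pair `(α, β)` can be
transformed into `(d, 0)` where `d` generates the same additive subgroup of `ℤ/mℤ` as
`{α, β}` (i.e. `d = gcd(m, α, β)`). -/
theorem genus_one_reduction (m : ℕ) (hm : 1 ≤ m) (α β : ZMod m) :
    ∃ σ ∈ Subgroup.closure ({e1 m, e2 m, nn m, rr m} : Set (Equiv.Perm (ZMod m × ZMod m))),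
      ∃ d : ZMod m, σ (α, β) = (d, 0) ∧
        AddSubgroup.closure {d} = AddSubgroup.closure {α, β} :=
  genus_one_reduction_general m α β
end

section
/- Let m ≥ 1, Z = ZMod m, k ∈ ℕ and γ : Fin k → Z. For every permutation σ in the subgroup of Equiv.Perm (Z × Z) generated by {e₁, e₂, n, r} ∪ {f_{γ i} : i ∈ Fin k} and every (α, β) ∈ Z × Z, writing (α', β') = σ (α, β), the additive subgroup of Z generated by {α', β'} ∪ {γ i + 1 : i ∈ Fin k} equals the additive subgroup of Z generated by {α, β} ∪ {γ i + 1 : i ∈ Fin k}. (This is the invariance claim underlying Definition 5.1 and Theorem 5.3: for genus 1 the Arf invariant δ = gcd(m, σ(a₁), σ(b₁), σ(c₂)+1, …, σ(cₙ)+1) is preserved under all Dehn twists, hence well defined.) -/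
/-!
Let `T` be the set of the `γ i + 1`. The permutations `g` with
`⟨(g p).1, (g p).2, T⟩ = ⟨p.1, p.2, T⟩` for all `p` form a subgroup, so it suffices to treat the
generators. Each generator and its inverse send `(α, β)` to a pair of `ℤ`-combinations of `α`, `β`
and elements of `T`; for `f_c` this uses `α - c - 1 = α - (c + 1)` with `c + 1 ∈ T`.
-/

namespace PairClosure

variable {M : Type*} [AddCommGroup M] (T : Set M)

abbrev pairClosure (p : M × M) : AddSubgroup M :=
  AddSubgroup.closure ({p.1, p.2} ∪ T)

variable {T}

lemma fst_mem_pairClosure (p : M × M) : p.1 ∈ pairClosure T p :=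
  AddSubgroup.subset_closure (Or.inl (Or.inl rfl))

lemma snd_mem_pairClosure (p : M × M) : p.2 ∈ pairClosure T p :=
  AddSubgroup.subset_closure (Or.inl (Or.inr rfl))

lemma mem_pairClosure_of_mem {t : M} (ht : t ∈ T) (p : M × M) : t ∈ pairClosure T p :=
  AddSubgroup.subset_closure (Or.inr ht)

lemma pairClosure_le {p q : M × M} (h₁ : q.1 ∈ pairClosure T p) (h₂ : q.2 ∈ pairClosure T p) :
    pairClosure T q ≤ pairClosure T p := by
  rw [AddSubgroup.closure_le]
  rintro x ((rfl | rfl) | hx)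
  exacts [h₁, h₂, mem_pairClosure_of_mem hx p]

variable (T)

def pairClosureStabilizer : Subgroup (Equiv.Perm (M × M)) where
  carrier := {g | ∀ p, pairClosure T (g p) = pairClosure T p}
  one_mem' _ := rfl
  mul_mem' {g h} hg hh p := (hg (h p)).trans (hh p)
  inv_mem' {g} hg p := by simpa using (hg (g⁻¹ p)).symm

variable {T}

lemma mem_pairClosureStabilizer {g : Equiv.Perm (M × M)}
    (hg : ∀ p, (g p).1 ∈ pairClosure T p ∧ (g p).2 ∈ pairClosure T p)
    (hg' : ∀ p, (g⁻¹ p).1 ∈ pairClosure T p ∧ (g⁻¹ p).2 ∈ pairClosure T p) :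
    g ∈ pairClosureStabilizer T := fun p =>
  le_antisymm (pairClosure_le (hg p).1 (hg p).2) <| by
    simpa using pairClosure_le (hg' (g p)).1 (hg' (g p)).2

end PairClosure

open PairClosure

section

variable {m : ℕ} {T : Set (ZMod m)}

lemma e1_mem_pairClosureStabilizer : e1 m ∈ pairClosureStabilizer T :=
  mem_pairClosureStabilizer
    (fun p => ⟨add_mem (fst_mem_pairClosure p) (snd_mem_pairClosure p), snd_mem_pairClosure p⟩)
    (fun p => ⟨sub_mem (fst_mem_pairClosure p) (snd_mem_pairClosure p), snd_mem_pairClosure p⟩)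

lemma e2_mem_pairClosureStabilizer : e2 m ∈ pairClosureStabilizer T :=
  mem_pairClosureStabilizer
    (fun p => ⟨fst_mem_pairClosure p, add_mem (snd_mem_pairClosure p) (fst_mem_pairClosure p)⟩)
    (fun p => ⟨fst_mem_pairClosure p, sub_mem (snd_mem_pairClosure p) (fst_mem_pairClosure p)⟩)

lemma nn_mem_pairClosureStabilizer : nn m ∈ pairClosureStabilizer T :=
  mem_pairClosureStabilizer
    (fun p => ⟨neg_mem (fst_mem_pairClosure p), neg_mem (snd_mem_pairClosure p)⟩)
    (fun p => ⟨neg_mem (fst_mem_pairClosure p), neg_mem (snd_mem_pairClosure p)⟩)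

lemma rr_mem_pairClosureStabilizer : rr m ∈ pairClosureStabilizer T :=
  mem_pairClosureStabilizer
    (fun p => ⟨neg_mem (snd_mem_pairClosure p), fst_mem_pairClosure p⟩)
    (fun p => ⟨snd_mem_pairClosure p, neg_mem (fst_mem_pairClosure p)⟩)

lemma ff_mem_pairClosureStabilizer {c : ZMod m} (hc : c + 1 ∈ T) :
    ff m c ∈ pairClosureStabilizer T :=
  mem_pairClosureStabilizer
    (fun p => ⟨neg_mem (snd_mem_pairClosure p), show p.1 - c - 1 ∈ _ by
      rw [sub_sub]; exact sub_mem (fst_mem_pairClosure p) (mem_pairClosure_of_mem hc p)⟩)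
    (fun p => ⟨show p.2 + c + 1 ∈ _ by
      rw [add_assoc]; exact add_mem (snd_mem_pairClosure p) (mem_pairClosure_of_mem hc p),
      neg_mem (fst_mem_pairClosure p)⟩)

end

theorem genus_one_invariance_general (m : ℕ) (k : ℕ) (γ : Fin k → ZMod m) :
    ∀ σ ∈ Subgroup.closure
      (({e1 m, e2 m, nn m, rr m} ∪ Set.range fun i => ff m (γ i)) :
        Set (Equiv.Perm (ZMod m × ZMod m))),
      ∀ α β : ZMod m,
        AddSubgroup.closure
            (({(σ (α, β)).1, (σ (α, β)).2} ∪ Set.range fun i => γ i + 1) : Set (ZMod m))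
          = AddSubgroup.closure
            (({α, β} ∪ Set.range fun i => γ i + 1) : Set (ZMod m)) := by
  have generators_le : Subgroup.closure ({e1 m, e2 m, nn m, rr m} ∪ Set.range fun i => ff m (γ i))
      ≤ pairClosureStabilizer (Set.range fun i => γ i + 1) := by
    rw [Subgroup.closure_le]
    rintro g ((rfl | rfl | rfl | rfl) | ⟨i, rfl⟩)
    exacts [e1_mem_pairClosureStabilizer, e2_mem_pairClosureStabilizer,
      nn_mem_pairClosureStabilizer, rr_mem_pairClosureStabilizer,
      ff_mem_pairClosureStabilizer ⟨i, rfl⟩]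
  exact fun σ hσ α β => generators_le hσ (α, β)

/-- The invariance underlying the genus-1 Arf invariant: every permutation in the group
generated by the Dehn twist transformations `e₁, e₂, n, r` and `f_{γ i}` preserves the
additive subgroup of `ℤ/mℤ` generated by `α, β` and the `γ i + 1`, i.e. the invariant
`δ = gcd(m, σ(a₁), σ(b₁), σ(c₂)+1, …, σ(cₙ)+1)` is well defined. -/
theorem genus_one_invariance (m : ℕ) (hm : 1 ≤ m) (k : ℕ) (γ : Fin k → ZMod m) :
    ∀ σ ∈ Subgroup.closure
      (({e1 m, e2 m, nn m, rr m} ∪ Set.range fun i => ff m (γ i)) :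
        Set (Equiv.Perm (ZMod m × ZMod m))),
      ∀ α β : ZMod m,
        AddSubgroup.closure
            (({(σ (α, β)).1, (σ (α, β)).2} ∪ Set.range fun i => γ i + 1) : Set (ZMod m))
          = AddSubgroup.closure
            (({α, β} ∪ Set.range fun i => γ i + 1) : Set (ZMod m)) :=
  genus_one_invariance_general m k γ
end
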